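/- Define the Kelvin inversion (𝒦f)(x) = (x̄/|x|⁸) f(x̄/|x|²) for octonion-valued f. Then the Szegő kernel satisfies S(x,a) = 𝒦(E(·, ā))(x), where E(x,a) = (x̄ - ā)/|x - a|⁸ and S(x,a) = (1 - x̄a)/|1 - x̄a|⁸, for all x ≠ 0 with x̄/|x|² ≠ ā. -/

import Mathlib

/-! Put `y = x̄/|x|²`, so that `ȳ = x/|x|²`. Although the octonions are not associative,
`x̄ x = |x|²` still holds, hence `x̄ (ȳ - a) = 1 - x̄a`; multiplicativity of the norm then gives
`|1 - x̄a| = |x| |y - ā|`, and the two normalising factors `|x|⁸ |y - ā|⁸` and `|1 - x̄a|⁸` agree. -/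

noncomputable section
open MeasureTheory Metric
open scoped Quaternion

/-- The octonions, via the Cayley–Dickson construction on the quaternions,
carrying the Euclidean (`L²`) norm. -/
abbrev Octonion : Type := WithLp 2 (ℍ[ℝ] × ℍ[ℝ])

namespace Octonion

def mk (a b : ℍ[ℝ]) : Octonion := (WithLp.equiv 2 (ℍ[ℝ] × ℍ[ℝ])).symm (a, b)
def p1 (x : Octonion) : ℍ[ℝ] := (WithLp.equiv 2 (ℍ[ℝ] × ℍ[ℝ]) x).1
def p2 (x : Octonion) : ℍ[ℝ] := (WithLp.equiv 2 (ℍ[ℝ] × ℍ[ℝ]) x).2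

instance : One Octonion := ⟨mk 1 0⟩
/-- Cayley–Dickson multiplication: `(a,b)(c,d) = (ac - d̄b, da + bc̄)`. -/
instance : Mul Octonion :=
  ⟨fun x y => mk (p1 x * p1 y - star (p2 y) * p2 x) (p2 y * p1 x + p2 x * star (p1 y))⟩

/-- Octonionic conjugation. -/
def conj (x : Octonion) : Octonion := mk (star (p1 x)) (-(p2 x))

/-- The standard basis `e₀ = 1, e₁, …, e₇` of the octonions. -/
def e : Fin 8 → Octonion
  | 0 => mk 1 0
  | 1 => mk ⟨0,1,0,0⟩ 0
  | 2 => mk ⟨0,0,1,0⟩ 0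
  | 3 => mk ⟨0,0,0,1⟩ 0
  | 4 => mk 0 1
  | 5 => mk 0 ⟨0,1,0,0⟩
  | 6 => mk 0 ⟨0,0,1,0⟩
  | 7 => mk 0 ⟨0,0,0,1⟩

/-- The real coordinates of an octonion w.r.t. the basis `e`. -/
def coord (i : Fin 8) (x : Octonion) : ℝ :=
  match i with
  | 0 => (p1 x).re | 1 => (p1 x).imI | 2 => (p1 x).imJ | 3 => (p1 x).imK
  | 4 => (p2 x).re | 5 => (p2 x).imI | 6 => (p2 x).imJ | 7 => (p2 x).imK

/-- Partial derivative in the direction `e i`. -/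
def pd (i : Fin 8) (f : Octonion → Octonion) (x : Octonion) : Octonion :=
  fderiv ℝ f x (e i)

/-- The generalized Cauchy–Riemann operator `Df = ∑ eᵢ ∂f/∂xᵢ`. -/
def D (f : Octonion → Octonion) (x : Octonion) : Octonion := ∑ i, e i * pd i f x

/-- The right-acting Cauchy–Riemann operator `fD = ∑ (∂f/∂xᵢ) eᵢ`. -/
def Dright (f : Octonion → Octonion) (x : Octonion) : Octonion := ∑ i, pd i f x * e i

/-- The conjugate Cauchy–Riemann operator `D̄f = ∑ ēᵢ ∂f/∂xᵢ`. -/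
def Dbar (f : Octonion → Octonion) (x : Octonion) : Octonion := ∑ i, conj (e i) * pd i f x

/-- The Laplacian `Δf = ∑ ∂²f/∂xᵢ²`. -/
def lap (f : Octonion → Octonion) (x : Octonion) : Octonion :=
  ∑ i, fderiv ℝ (fun y => fderiv ℝ f y (e i)) x (e i)

instance : MeasurableSpace Octonion := borel _
instance : BorelSpace Octonion := ⟨rfl⟩
instance : MeasureSpace Octonion := ⟨Measure.addHaar⟩

/-- The surface measure on the unit sphere `S⁷`. -/
def sphereMeasure : Measure (sphere (0 : Octonion) 1) := (volume : Measure Octonion).toSphere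

/-- `ω₈`, the surface area of the unit sphere in `ℝ⁸`. -/
def ω : ℝ := (sphereMeasure Set.univ).toReal

lemma ext {x y : Octonion} (h1 : p1 x = p1 y) (h2 : p2 x = p2 y) : x = y :=
  (WithLp.equiv 2 (ℍ[ℝ] × ℍ[ℝ])).injective (Prod.ext h1 h2)

@[simp] lemma p1_one : p1 (1 : Octonion) = 1 := rfl
@[simp] lemma p2_one : p2 (1 : Octonion) = 0 := rfl
@[simp] lemma p1_smul (r : ℝ) (x : Octonion) : p1 (r • x) = r • p1 x := rfl
@[simp] lemma p2_smul (r : ℝ) (x : Octonion) : p2 (r • x) = r • p2 x := rfl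
@[simp] lemma p1_sub (x y : Octonion) : p1 (x - y) = p1 x - p1 y := rfl
@[simp] lemma p2_sub (x y : Octonion) : p2 (x - y) = p2 x - p2 y := rfl
@[simp] lemma p1_conj (x : Octonion) : p1 (conj x) = star (p1 x) := rfl
@[simp] lemma p2_conj (x : Octonion) : p2 (conj x) = -p2 x := rfl

lemma p1_mul (x y : Octonion) : p1 (x * y) = p1 x * p1 y - star (p2 y) * p2 x := rfl
lemma p2_mul (x y : Octonion) : p2 (x * y) = p2 y * p1 x + p2 x * star (p1 y) := rfl

@[simp] lemma conj_conj (x : Octonion) : conj (conj x) = x := by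
  apply ext <;> simp

lemma conj_smul (r : ℝ) (x : Octonion) : conj (r • x) = r • conj x := by
  apply ext <;> simp

lemma conj_sub (x y : Octonion) : conj (x - y) = conj x - conj y := by
  apply ext
  · simp
  · simp only [p2_conj, p2_sub]; abel

lemma mul_smul (r : ℝ) (x y : Octonion) : x * (r • y) = r • (x * y) := by
  apply ext <;> simp [p1_mul, p2_mul, smul_sub, smul_add]

lemma mul_sub (x y z : Octonion) : x * (y - z) = x * y - x * z := by
  apply ext <;>
    simp only [p1_mul, p2_mul, p1_sub, p2_sub, star_sub, _root_.mul_sub, _root_.sub_mul] <;>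
    abel

lemma norm_sq (x : Octonion) :
    ‖x‖ ^ 2 = Quaternion.normSq (p1 x) + Quaternion.normSq (p2 x) := by
  rw [WithLp.prod_norm_sq_eq_of_L2, Quaternion.normSq_eq_norm_mul_self,
    Quaternion.normSq_eq_norm_mul_self, sq, sq]
  rfl

lemma norm_conj (x : Octonion) : ‖conj x‖ = ‖x‖ := by
  refine (pow_left_inj₀ (norm_nonneg _) (norm_nonneg _) two_ne_zero).1 ?_
  simp [norm_sq]

lemma norm_mul (x y : Octonion) : ‖x * y‖ = ‖x‖ * ‖y‖ := by
  refine (pow_left_inj₀ (norm_nonneg _) (by positivity) two_ne_zero).1 ?_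
  rw [mul_pow, norm_sq, norm_sq, norm_sq, p1_mul, p2_mul]
  simp only [Quaternion.normSq_def', Quaternion.re_mul, Quaternion.imI_mul,
    Quaternion.imJ_mul, Quaternion.imK_mul, Quaternion.re_sub, Quaternion.imI_sub,
    Quaternion.imJ_sub, Quaternion.imK_sub, Quaternion.re_add, Quaternion.imI_add,
    Quaternion.imJ_add, Quaternion.imK_add, Quaternion.re_star, Quaternion.imI_star,
    Quaternion.imJ_star, Quaternion.imK_star]
  ring

lemma conj_mul_self (x : Octonion) : conj x * x = ‖x‖ ^ 2 • (1 : Octonion) := by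
  apply ext
  · rw [p1_mul, norm_sq, p1_smul, p1_one, p1_conj, p2_conj, mul_neg, sub_neg_eq_add,
      Quaternion.star_mul_self, Quaternion.star_mul_self, Algebra.smul_def, mul_one, map_add]
    rfl
  · simp [p2_mul]

lemma conj_mul_inv_normSq_smul {x : Octonion} (hx : x ≠ 0) :
    conj x * ((‖x‖ ^ 2)⁻¹ • x) = 1 := by
  rw [mul_smul, conj_mul_self, smul_smul, inv_mul_cancel₀ (by positivity), one_smul]

lemma conj_mul_inv_sub {x : Octonion} (hx : x ≠ 0) (a : Octonion) :
    conj x * ((‖x‖ ^ 2)⁻¹ • x - a) = 1 - conj x * a := by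
  rw [mul_sub, conj_mul_inv_normSq_smul hx]

lemma norm_one_sub_conj_mul {x : Octonion} (hx : x ≠ 0) (a : Octonion) :
    ‖1 - conj x * a‖ = ‖x‖ * ‖(‖x‖ ^ 2)⁻¹ • conj x - conj a‖ := by
  rw [← conj_mul_inv_sub hx, norm_mul, norm_conj, ← norm_conj (_ - conj a), conj_sub,
    conj_smul, conj_conj, conj_conj]

end Octonion

/-- The translated octonionic Cauchy kernel `E(x,a) = (x̄ - ā)/|x - a|⁸`. -/
def cauchyKernel (x a : Octonion) : Octonion :=
  (‖x - a‖ ^ 8)⁻¹ • (Octonion.conj x - Octonion.conj a)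

open Octonion

/-- The Szegő kernel `S(x,a) = (1 - x̄a)/|1 - x̄a|⁸`. -/
def szegoKernel (x a : Octonion) : Octonion :=
  (‖1 - conj x * a‖ ^ 8)⁻¹ • (1 - conj x * a)

/-- The Kelvin inversion `(𝒦f)(x) = (x̄/|x|⁸) f(x̄/|x|²)`. -/
def kelvin (f : Octonion → Octonion) (x : Octonion) : Octonion :=
  (‖x‖ ^ 8)⁻¹ • (conj x * f ((‖x‖ ^ 2)⁻¹ • conj x))

theorem szegoKernel_eq_kelvin_cauchyKernel {x : Octonion} (hx : x ≠ 0) (a : Octonion) :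
    szegoKernel x a = kelvin (fun y => cauchyKernel y (conj a)) x := by
  rw [szegoKernel, kelvin, cauchyKernel, Octonion.mul_smul, conj_smul, conj_conj, conj_conj,
    conj_mul_inv_sub hx, smul_smul, norm_one_sub_conj_mul hx, mul_pow, mul_inv]

theorem szego_eq_kelvin_of_cauchy_general (x a : Octonion) (hx : x ≠ 0) :
    (‖(1 : Octonion) - Octonion.conj x * a‖ ^ 8)⁻¹ •
        ((1 : Octonion) - Octonion.conj x * a) =
      (‖x‖ ^ 8)⁻¹ •
        (Octonion.conj x *
          cauchyKernel ((‖x‖ ^ 2)⁻¹ • Octonion.conj x) (Octonion.conj a)) :=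
  szegoKernel_eq_kelvin_cauchyKernel hx a

/-- The Szegő kernel is the Kelvin inversion of the Cauchy kernel:
`S(x,a) = (x̄/|x|⁸) E(x̄/|x|², ā)`. -/
theorem szego_eq_kelvin_of_cauchy (x a : Octonion) (hx : x ≠ 0)
    (h : (‖x‖ ^ 2)⁻¹ • Octonion.conj x ≠ Octonion.conj a) :
    (‖(1 : Octonion) - Octonion.conj x * a‖ ^ 8)⁻¹ •
        ((1 : Octonion) - Octonion.conj x * a) =
      (‖x‖ ^ 8)⁻¹ •
        (Octonion.conj x *
          cauchyKernel ((‖x‖ ^ 2)⁻¹ • Octonion.conj x) (Octonion.conj a)) :=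
  szego_eq_kelvin_of_cauchy_general x a hx
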